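/- arXiv:1211.0391 — 3 statements merged into one kernel-verified Lean document; each statement's English description precedes it below -/
import Mathlib

section
/- Ryser's formula: for an n×n matrix M over a commutative ring, per(M) = (-1)^n ∑_{S ⊆ {1,…,n}} (-1)^{|S|} ∏_{i=1}^n ∑_{j ∈ S} M_{i,j}. -/
/-!
Expanding `∏ i, ∑ j ∈ S, M i j` writes the alternating sum as a sum over all maps `f : ι → ι`,
the map `f` being weighted by `∏ i, M i (f i)` times `∑ S ⊇ range f, (-1) ^ #S`. That inner sum
is `∏ j, (-1 + [j ∉ range f])`, which vanishes unless `f` is surjective, i.e. a permutation.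
-/

open Finset

namespace Finset

theorem sum_powerset_supset_neg_one_pow_card {α R : Type*} [Fintype α] [DecidableEq α]
    [CommRing R] (A : Finset α) :
    ∑ S ∈ univ.powerset with A ⊆ S, (-1 : R) ^ #S
      = if A = univ then (-1) ^ Fintype.card α else 0 := by
  have expand := prod_add (fun _ ↦ (-1 : R)) (fun j ↦ if j ∉ A then 1 else 0) univ
  simp only [prod_const, prod_ite_zero, one_pow, mul_ite, mul_one, mul_zero] at expand
  rw [sum_filter]
  convert expand.symm using 2 with S
  · simp [subset_iff, not_imp_not]
  · split_ifs with hA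
    · simp [hA]
    · obtain ⟨j, hj⟩ : ∃ j, j ∉ A := by simpa [eq_univ_iff_forall] using hA
      exact (prod_eq_zero (mem_univ j) (by simp [hj])).symm

theorem sum_image_univ_eq_univ_eq_sum_perm {ι β : Type*} [Fintype ι] [DecidableEq ι]
    [AddCommMonoid β] (g : (ι → ι) → β) :
    ∑ f with univ.image f = univ, g f = ∑ σ : Equiv.Perm ι, g σ := by
  have surjective_of_image_eq_univ {f : ι → ι} (hf : univ.image f = univ) : f.Surjective :=
    fun y ↦ by simpa using hf.ge (mem_univ y)
  refine sum_bij' (fun f hf ↦ Equiv.ofBijective f ?_) (fun σ _ ↦ σ) ?_ ?_ ?_ ?_ ?_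
  · exact Finite.surjective_iff_bijective.mp (surjective_of_image_eq_univ (mem_filter.mp hf).2)
  all_goals intros; simp_all

end Finset

namespace Matrix

variable {ι R : Type*} [Fintype ι] [DecidableEq ι] [CommRing R]

theorem sum_powerset_neg_one_pow_card_mul_prod_sum (M : Matrix ι ι R) :
    ∑ S ∈ univ.powerset, (-1) ^ #S * ∏ i, ∑ j ∈ S, M i j
      = (-1) ^ Fintype.card ι * Mᵀ.permanent := by
  calc ∑ S ∈ univ.powerset, (-1) ^ #S * ∏ i, ∑ j ∈ S, M i j
      = ∑ S ∈ univ.powerset, ∑ f ∈ Fintype.piFinset fun _ ↦ S, (-1) ^ #S * ∏ i, M i (f i) := by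
        refine sum_congr rfl fun S _ ↦ ?_
        rw [← sum_prod_piFinset S M, mul_sum]
    _ = ∑ f : ι → ι, ∑ S ∈ univ.powerset with univ.image f ⊆ S, (-1) ^ #S * ∏ i, M i (f i) :=
        sum_comm' fun S f ↦ by simp [image_subset_iff]
    _ = ∑ f : ι → ι,
          (if univ.image f = univ then (-1) ^ Fintype.card ι else 0) * ∏ i, M i (f i) := by
        simp_rw [← sum_mul, sum_powerset_supset_neg_one_pow_card]
    _ = (-1) ^ Fintype.card ι * ∑ f with univ.image f = univ, ∏ i, M i (f i) := by
        simp_rw [sum_filter, mul_sum, ite_mul, zero_mul, mul_ite, mul_zero]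
    _ = (-1) ^ Fintype.card ι * Mᵀ.permanent := by
        rw [sum_image_univ_eq_univ_eq_sum_perm]
        rfl

theorem permanent_eq_neg_one_pow_mul_sum_powerset (M : Matrix ι ι R) :
    M.permanent
      = (-1) ^ Fintype.card ι * ∑ S ∈ univ.powerset, (-1) ^ #S * ∏ i, ∑ j ∈ S, M i j := by
  rw [sum_powerset_neg_one_pow_card_mul_prod_sum, ← mul_assoc, ← mul_pow, neg_one_mul, neg_neg,
    one_pow, one_mul, permanent_transpose]

end Matrix

open Finset in
theorem stmt_8 {R : Type*} [CommRing R] (n : ℕ) (M : Matrix (Fin n) (Fin n) R) :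
    ∑ σ : Equiv.Perm (Fin n), ∏ i, M i (σ i)
      = (-1 : R) ^ n * ∑ S ∈ (Finset.univ : Finset (Fin n)).powerset,
          (-1 : R) ^ S.card * ∏ i, ∑ j ∈ S, M i j := by
  have ryser := Matrix.permanent_eq_neg_one_pow_mul_sum_powerset M
  rw [← Matrix.permanent_transpose, Fintype.card_fin] at ryser
  exact ryser
end

section
/- Inclusion–exclusion formula for counting permutations with no fixed structure outside a set: for an n×n matrix M over a commutative ring, the number of Hamiltonian cycles weighted by arc weights equals ∑_{σ ∈ C_n} ∏_{i=1}^n M_{i,σ(i)}, where C_n ⊆ S_n is the set of n-cycles, and this sum equals ∑_{S ⊆ {2,…,n}} (-1)^{|S|} · (weighted closed walks of length n through vertex 1 avoiding S). -/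
/-!
In the alternating sum, a closed walk `v` from `0` is counted with total sign
`∑_{S ⊆ T \ range v} (-1)^|S|`, `T = {1, …, n-1}`, which vanishes unless `v` visits every vertex.
A surjective closed walk of length `n` visits every vertex exactly once before returning, so it is
the orbit `i ↦ σ^i 0` of a unique `n`-cycle `σ`, and its weight is `∏ i, M i (σ i)`.
-/

open Finset Function

namespace Finset

variable {α : Type*} [DecidableEq α]

theorem filter_disjoint_powerset (T u : Finset α) :
    {S ∈ T.powerset | Disjoint S u} = (T \ u).powerset := by
  ext S
  simp [subset_sdiff]

theorem sum_powerset_neg_one_pow_card_eq_ite (R : Type*) [Ring R] (T : Finset α) :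
    ∑ S ∈ T.powerset, (-1 : R) ^ #S = if T = ∅ then 1 else 0 := by
  simpa using congrArg (Int.cast : ℤ → R) (sum_powerset_neg_one_pow_card (x := T))

theorem sum_powerset_neg_one_pow_card_mul_sum_avoiding {ι R : Type*} [Fintype ι] [Ring R]
    (T : Finset α) (s : Finset (ι → α)) (f : (ι → α) → R) :
    ∑ S ∈ T.powerset, (-1 : R) ^ #S * ∑ v ∈ s with ∀ i, v i ∉ S, f v
      = ∑ v ∈ s with T ⊆ univ.image v, f v := by
  have inner (v : ι → α) : ∑ S ∈ T.powerset with ∀ i, v i ∉ S, (-1 : R) ^ #S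
      = if T ⊆ univ.image v then 1 else 0 := by
    have avoid (S : Finset α) : (∀ i, v i ∉ S) ↔ Disjoint S (univ.image v) := by
      simp [disjoint_right]
    rw [filter_congr fun S _ => avoid S, filter_disjoint_powerset,
      sum_powerset_neg_one_pow_card_eq_ite]
    simp only [sdiff_eq_empty_iff_subset]
  simp_rw [mul_sum, sum_filter]
  rw [sum_comm]
  refine sum_congr rfl fun v _ => ?_
  rw [← sum_filter, ← sum_mul, inner, boole_mul]

theorem univ_erase_subset_image_iff {ι : Type*} [Fintype ι] [Fintype α]
    {v : ι → α} {i : ι} : univ.erase (v i) ⊆ univ.image v ↔ Surjective v := by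
  refine ⟨fun h a => ?_, fun h a _ => by simpa using h a⟩
  by_cases ha : a = v i
  · exact ⟨i, ha.symm⟩
  · simpa using h (mem_erase.2 ⟨ha, mem_univ a⟩)

end Finset

theorem Function.Surjective.bijective_comp_castSucc {α : Type*} [Fintype α] {n : ℕ}
    {v : Fin (n + 1) → α} (hv : Surjective v) (hloop : v (Fin.last n) = v 0)
    (hn : Fintype.card α = n) : Bijective fun i : Fin n => v i.castSucc := by
  refine (Fintype.bijective_iff_surjective_and_card _).2 ⟨fun b => ?_, by simp [hn]⟩
  obtain ⟨j, rfl⟩ := hv b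
  by_cases hj : j = Fin.last n
  · have : NeZero n := ⟨hn ▸ (Fintype.card_pos_iff.2 ⟨v 0⟩).ne'⟩
    obtain ⟨i, hi⟩ := Fin.exists_castSucc_eq.2 (Fin.last_pos' (n := n)).ne
    subst hj
    exact ⟨i, (congrArg v hi).trans hloop.symm⟩
  · obtain ⟨i, hi⟩ := Fin.exists_castSucc_eq.2 hj
    exact ⟨i, congrArg v hi⟩

theorem Function.Surjective.bijective_comp_succ {α : Type*} [Fintype α] {n : ℕ}
    {v : Fin (n + 1) → α} (hv : Surjective v) (hloop : v (Fin.last n) = v 0)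
    (hn : Fintype.card α = n) : Bijective fun i : Fin n => v i.succ := by
  refine (Fintype.bijective_iff_surjective_and_card _).2 ⟨fun b => ?_, by simp [hn]⟩
  obtain ⟨j, rfl⟩ := hv b
  by_cases hj : j = 0
  · have : NeZero n := ⟨hn ▸ (Fintype.card_pos_iff.2 ⟨v 0⟩).ne'⟩
    obtain ⟨i, hi⟩ := Fin.exists_succ_eq.2 (Fin.last_pos' (n := n)).ne'
    subst hj
    exact ⟨i, (congrArg v hi).trans hloop⟩
  · obtain ⟨i, hi⟩ := Fin.exists_succ_eq.2 hj
    exact ⟨i, congrArg v hi⟩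

namespace Equiv.Perm

variable {α : Type*} {σ τ : Perm α} {x : α} {n : ℕ}

def orbitWalk (σ : Perm α) (x : α) (n : ℕ) (i : Fin (n + 1)) : α :=
  (σ ^ (i : ℕ)) x

@[simp]
theorem orbitWalk_zero : σ.orbitWalk x n 0 = x := by
  simp [orbitWalk]

theorem orbitWalk_succ (i : Fin n) :
    σ.orbitWalk x n i.succ = σ (σ.orbitWalk x n i.castSucc) := by
  simp [orbitWalk, pow_succ']

theorem sameCycle_orbitWalk (i : Fin (n + 1)) : σ.SameCycle x (σ.orbitWalk x n i) :=
  sameCycle_pow_right.2 SameCycle.rfl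

theorem eq_of_orbitWalk_eq (hσ : Surjective fun i : Fin n => σ.orbitWalk x n i.castSucc)
    (h : σ.orbitWalk x n = τ.orbitWalk x n) : σ = τ := by
  ext a
  obtain ⟨i, rfl⟩ := hσ a
  rw [← orbitWalk_succ, h, orbitWalk_succ]

variable [Fintype α]

theorem isCycleOn_univ_of_forall_sameCycle (hσ : ∀ a b, σ.SameCycle a b) :
    σ.IsCycleOn ((univ : Finset α) : Set α) :=
  ⟨coe_univ (α := α) ▸ Set.bijOn_univ.2 σ.bijective, fun a _ b _ => hσ a b⟩

theorem orbitWalk_last (hσ : ∀ a b, σ.SameCycle a b) (hn : Fintype.card α = n) :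
    σ.orbitWalk x n (Fin.last n) = x := by
  have := (isCycleOn_univ_of_forall_sameCycle hσ).pow_card_apply (mem_univ x)
  rwa [card_univ, hn] at this

theorem surjective_orbitWalk_castSucc (hσ : ∀ a b, σ.SameCycle a b)
    (hn : Fintype.card α = n) : Surjective fun i : Fin n => σ.orbitWalk x n i.castSucc := by
  intro b
  obtain ⟨k, hk, rfl⟩ :=
    (isCycleOn_univ_of_forall_sameCycle hσ).exists_pow_eq (mem_univ x) (mem_univ b)
  exact ⟨⟨k, by simpa [hn] using hk⟩, rfl⟩

theorem prod_orbitWalk {M : Type*} [CommMonoid M] (hσ : ∀ a b, σ.SameCycle a b)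
    (hn : Fintype.card α = n) (f : α → α → M) :
    ∏ i : Fin n, f (σ.orbitWalk x n i.castSucc) (σ.orbitWalk x n i.succ) = ∏ a, f a (σ a) := by
  simp only [orbitWalk_succ]
  exact Fintype.prod_bijective _ ((Fintype.bijective_iff_surjective_and_card _).2
    ⟨surjective_orbitWalk_castSucc hσ hn, by simp [hn]⟩) _ _ fun _ => rfl

theorem exists_forall_sameCycle_orbitWalk_eq {v : Fin (n + 1) → α}
    (hv : Surjective v) (h0 : v 0 = x) (hlast : v (Fin.last n) = x) (hn : Fintype.card α = n) :
    ∃ σ : Perm α, (∀ a b, σ.SameCycle a b) ∧ σ.orbitWalk x n = v := by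
  have hloop : v (Fin.last n) = v 0 := hlast.trans h0.symm
  let σ : Perm α := (Equiv.ofBijective _ (hv.bijective_comp_castSucc hloop hn)).symm.trans
    (Equiv.ofBijective _ (hv.bijective_comp_succ hloop hn))
  have hstep (i : Fin n) : σ (v i.castSucc) = v i.succ := by
    simp [σ, Equiv.ofBijective_symm_apply_apply]
  have hwalk : σ.orbitWalk x n = v := by
    funext i
    induction i using Fin.induction with
    | zero => rw [orbitWalk_zero, h0]
    | succ i ih => rw [orbitWalk_succ, ih, hstep]
  have hx (a : α) : σ.SameCycle x a := by
    obtain ⟨i, rfl⟩ := hv a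
    exact hwalk ▸ sameCycle_orbitWalk i
  exact ⟨σ, fun a b => (hx a).symm.trans (hx b), hwalk⟩

theorem sum_forall_sameCycle_prod_eq_sum_closedWalk {R : Type*} [CommSemiring R] [DecidableEq α]
    (hn : Fintype.card α = n) (x : α) (M : α → α → R) :
    ∑ σ ∈ univ.filter (fun σ : Perm α => ∀ a b, σ.SameCycle a b), ∏ a, M a (σ a)
      = ∑ v ∈ univ.filter (fun v : Fin (n + 1) → α =>
          v 0 = x ∧ v (Fin.last n) = x ∧ Surjective v),
        ∏ i : Fin n, M (v i.castSucc) (v i.succ) := by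
  refine sum_nbij (fun σ => σ.orbitWalk x n) (fun σ hσ => ?_) (fun σ hσ τ _ h => ?_)
    (fun v hv => ?_) (fun σ hσ => ?_)
  · have hσ := (mem_filter.1 hσ).2
    exact mem_filter.2 ⟨mem_univ _, orbitWalk_zero, orbitWalk_last hσ hn,
      (surjective_orbitWalk_castSucc hσ hn).of_comp⟩
  · exact eq_of_orbitWalk_eq (surjective_orbitWalk_castSucc (mem_filter.1 hσ).2 hn) h
  · obtain ⟨-, h0, hlast, hv⟩ := mem_filter.1 hv
    obtain ⟨σ, hσ, rfl⟩ := exists_forall_sameCycle_orbitWalk_eq hv h0 hlast hn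
    exact ⟨σ, mem_filter.2 ⟨mem_univ _, hσ⟩, rfl⟩
  · exact (prod_orbitWalk (mem_filter.1 hσ).2 hn M).symm

end Equiv.Perm

open Classical Finset in
theorem stmt_9 {R : Type*} [CommRing R] (n : ℕ) [NeZero n]
    (M : Matrix (Fin n) (Fin n) R) :
    ∑ σ ∈ Finset.univ.filter (fun σ : Equiv.Perm (Fin n) => ∀ a b, σ.SameCycle a b),
        ∏ i, M i (σ i)
      = ∑ S ∈ ((Finset.univ : Finset (Fin n)).erase 0).powerset, (-1 : R) ^ S.card *
          ∑ v ∈ Finset.univ.filter (fun v : Fin (n + 1) → Fin n =>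
              v 0 = 0 ∧ v (Fin.last n) = 0 ∧ ∀ i, v i ∉ S),
            ∏ i : Fin n, M (v i.castSucc) (v i.succ) := by
  have avoid := sum_powerset_neg_one_pow_card_mul_sum_avoiding (univ.erase 0)
    {v : Fin (n + 1) → Fin n | v 0 = 0 ∧ v (Fin.last n) = 0}
    fun v => ∏ i : Fin n, M (v i.castSucc) (v i.succ)
  simp only [filter_filter, and_assoc] at avoid
  rw [filter_congr fun v _ => and_congr_right fun h0 => and_congr_right fun _ =>
    by rw [← h0, univ_erase_subset_image_iff]] at avoid
  -- `convert` only bridges the decidability instances of the filters (`Nat.decidableForallFin`).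
  convert (Equiv.Perm.sum_forall_sameCycle_prod_eq_sum_closedWalk (Fintype.card_fin n) 0 M).trans
    avoid.symm
end

section
/- Let p be a polynomial over a commutative ring R, presented as ∑ over a finite index set T of monomials c_t · r^{d(t)}, where each index t encodes a sequence of vertices and d(t) counts the number of vertices of t lying in a fixed set X. If each contributing t with d(t) = m visits a set Y_t ⊆ X of vertices and any t with a repeated vertex has Y_t ⊊ X, then ∑_{X' ⊆ X} (-1)^{|X∖X'|} · [r^m](p restricted to X') counts exactly the t with d(t) = m, Y_t = X, and no repeated vertex. -/
/-!
Swap the two sums. An index `t` with `Y t ⊆ X` is counted once for every `X'` between `Y t` and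
`X`, with sign `(-1) ^ #(X \ X')`; these signs sum to `1` if `Y t = X` and to `0` otherwise
(the alternating sum over the subsets of `X \ Y t`). Among the indices with `d t = m`, those with
`Y t = X` are exactly the ones without a repeated vertex.
-/
namespace Finset

variable {α ι R : Type*} [DecidableEq α] [CommRing R]

theorem sum_powerset_filter_superset_neg_one_pow_card_sdiff {s u : Finset α} (hsu : s ⊆ u) :
    ∑ t ∈ u.powerset with s ⊆ t, (-1 : R) ^ #(u \ t) = if s = u then 1 else 0 := by
  have hcompl : ∑ t ∈ u.powerset with s ⊆ t, (-1 : R) ^ #(u \ t)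
      = ∑ t ∈ (u \ s).powerset, (-1 : R) ^ #t := by
    refine sum_nbij' (u \ ·) (u \ ·) ?_ ?_ ?_ ?_ fun _ _ ↦ rfl
    · intro t ht
      simp only [mem_filter, mem_powerset] at ht ⊢
      exact sdiff_subset_sdiff subset_rfl ht.2
    · intro t ht
      simp only [mem_filter, mem_powerset] at ht ⊢
      exact ⟨sdiff_subset, subset_sdiff.2 ⟨hsu, disjoint_of_subset_right ht disjoint_sdiff⟩⟩
    · intro t ht
      simp only [mem_filter, mem_powerset] at ht
      exact Finset.sdiff_sdiff_eq_self ht.1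
    · intro t ht
      rw [mem_powerset] at ht
      exact Finset.sdiff_sdiff_eq_self (ht.trans sdiff_subset)
  have hsign := congrArg (Int.cast : ℤ → R) (sum_powerset_neg_one_pow_card (x := u \ s))
  push_cast at hsign
  rw [hcompl, hsign]
  exact if_congr (sdiff_eq_empty_iff_subset.trans ⟨hsu.antisymm, (·.ge)⟩) rfl rfl

theorem sum_powerset_neg_one_pow_mul_sum_filter_subset (u : Finset α) (T : Finset ι)
    (Y : ι → Finset α) (c : ι → R) (hYu : ∀ i ∈ T, Y i ⊆ u) :
    ∑ t ∈ u.powerset, (-1 : R) ^ #(u \ t) * ∑ i ∈ T with Y i ⊆ t, c i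
      = ∑ i ∈ T with Y i = u, c i := by
  simp only [mul_sum, sum_filter]
  rw [sum_comm]
  refine sum_congr rfl fun i hi ↦ ?_
  simp only [mul_ite, mul_zero]
  rw [← sum_filter, ← sum_mul, sum_powerset_filter_superset_neg_one_pow_card_sdiff (hYu i hi),
    ite_mul, one_mul, zero_mul]

end Finset

open Classical Finset in
theorem stmt_16_general {V R ι : Type*} [DecidableEq V] [CommRing R]
    (X : Finset V) (T : Finset ι) (c : ι → R) (d : ι → ℕ) (Y : ι → Finset V)
    (rep : ι → Prop) (m : ℕ)
    (hYX : ∀ t ∈ T, Y t ⊆ X)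
    (hrep : ∀ t ∈ T, d t = m → rep t → Y t ⊂ X) :
    ∑ X' ∈ X.powerset, (-1 : R) ^ ((X \ X').card) *
        ∑ t ∈ T.filter (fun t => d t = m ∧ Y t ⊆ X'), c t
      = ∑ t ∈ T.filter (fun t => d t = m ∧ Y t = X ∧ ¬ rep t), c t := by
  have hcancel := sum_powerset_neg_one_pow_mul_sum_filter_subset X (T.filter (d · = m)) Y c
    fun t ht ↦ hYX t (mem_filter.1 ht).1
  simp only [filter_filter] at hcancel
  rw [hcancel]
  refine sum_congr (filter_congr fun t ht ↦ ?_) fun _ _ ↦ rfl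
  exact and_congr_right fun hd ↦
    ⟨fun hY ↦ ⟨hY, fun hr ↦ (hrep t ht hd hr).ne hY⟩, And.left⟩

open Classical Finset in
theorem stmt_16 {V R ι : Type*} [DecidableEq V] [CommRing R]
    (X : Finset V) (T : Finset ι) (c : ι → R) (d : ι → ℕ) (Y : ι → Finset V)
    (rep : ι → Prop) (m : ℕ) (hm : m = X.card)
    (hYX : ∀ t ∈ T, Y t ⊆ X)
    (hrep : ∀ t ∈ T, d t = m → rep t → Y t ⊂ X)
    (hnrep : ∀ t ∈ T, d t = m → ¬ rep t → Y t = X) :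
    ∑ X' ∈ X.powerset, (-1 : R) ^ ((X \ X').card) *
        ∑ t ∈ T.filter (fun t => d t = m ∧ Y t ⊆ X'), c t
      = ∑ t ∈ T.filter (fun t => d t = m ∧ Y t = X ∧ ¬ rep t), c t :=
  stmt_16_general X T c d Y rep m hYX hrep
end
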